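/- Let I be a secure network-coding instance and I' its augmented instance. Then I admits a valid secure (possibly randomised) network code with source rates R_S and block size n if and only if I' admits a valid secure deterministic network code with source rates R'_{S'} (where R'_s = R_s for s ∈ S and R'_{S̄+v} = k_v for v ∈ V) and block size n: the randomness Z_v used at each node v of I is realised by the additional source X'_{S̄+v} of I', and conversely. -/

import Mathlib

open scoped Classical

noncomputable section

/-! ### Finite probability: pmf, events, distributions, Shannon entropy -/

structure FinPMF (Ω : Type) [Fintype Ω] where
  p : Ω → ℝ
  nonneg : ∀ ω, 0 ≤ p ω
  sum_one : ∑ ω, p ω = 1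

namespace FinPMF

variable {Ω : Type} [Fintype Ω]

/-- Probability of an event. -/
def prob (μ : FinPMF Ω) (E : Ω → Prop) : ℝ := ∑ ω, if E ω then μ.p ω else 0

/-- Distribution (pushforward pmf) of a random variable `X`. -/
def dist {A : Type} [Fintype A] (μ : FinPMF Ω) (X : Ω → A) (a : A) : ℝ :=
  μ.prob fun ω => X ω = a

/-- Shannon entropy of the random variable `X` (natural logarithm). -/
def entH {A : Type} [Fintype A] (μ : FinPMF Ω) (X : Ω → A) : ℝ :=
  -∑ a, μ.dist X a * Real.log (μ.dist X a)

/-- Conditional Shannon entropy `H(X | Y)`. -/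
def condH {A B : Type} [Fintype A] [Fintype B] (μ : FinPMF Ω) (X : Ω → A) (Y : Ω → B) : ℝ :=
  μ.entH (fun ω => (X ω, Y ω)) - μ.entH Y

/-- Mutual information `I(X ; Y)`. -/
def mutI {A B : Type} [Fintype A] [Fintype B] (μ : FinPMF Ω) (X : Ω → A) (Y : Ω → B) : ℝ :=
  μ.entH X + μ.entH Y - μ.entH (fun ω => (X ω, Y ω))

/-- Independence of two random variables. -/
def Indep {A B : Type} [Fintype A] [Fintype B] (μ : FinPMF Ω) (X : Ω → A) (Y : Ω → B) : Prop :=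
  ∀ a b, μ.dist (fun ω => (X ω, Y ω)) (a, b) = μ.dist X a * μ.dist Y b

/-- `X` is uniformly distributed. -/
def IsUniform {A : Type} [Fintype A] (μ : FinPMF Ω) (X : Ω → A) : Prop :=
  ∀ a, μ.dist X a = (Fintype.card A : ℝ)⁻¹

/-- The conditional probability measure given an event of positive probability. -/
def cond (μ : FinPMF Ω) (E : Ω → Prop) (h : 0 < μ.prob E) : FinPMF Ω where
  p ω := if E ω then μ.p ω / μ.prob E else 0
  nonneg ω := by
    (try dsimp only); split
    · exact div_nonneg (μ.nonneg ω) h.le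
    · exact le_rfl
  sum_one := by
    have h1 : ∀ ω ∈ Finset.univ,
        (if E ω then μ.p ω / μ.prob E else 0) = (if E ω then μ.p ω else 0) / μ.prob E := by
      intro ω _; split <;> simp
    rw [Finset.sum_congr rfl h1, ← Finset.sum_div]
    exact div_self h.ne'

end FinPMF

/-- Product of two pmfs (independent coupling). -/
def prodPMF {A B : Type} [Fintype A] [Fintype B] (μ : FinPMF A) (ν : FinPMF B) :
    FinPMF (A × B) where
  p x := μ.p x.1 * ν.p x.2
  nonneg x := mul_nonneg (μ.nonneg _) (ν.nonneg _)
  sum_one := by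
    rw [Fintype.sum_prod_type]
    simp_rw [← Finset.mul_sum, ν.sum_one, mul_one]
    exact μ.sum_one

/-- Product of a finite family of pmfs (mutually independent coupling). -/
def piPMF {ι : Type} [Fintype ι] {α : ι → Type} [∀ i, Fintype (α i)]
    (μ : ∀ i, FinPMF (α i)) : FinPMF (∀ i, α i) where
  p x := ∏ i, (μ i).p (x i)
  nonneg x := Finset.prod_nonneg fun i _ => (μ i).nonneg _
  sum_one := by
    rw [← Fintype.prod_sum (fun i a => (μ i).p a)]
    rw [Finset.prod_congr rfl fun i _ => (μ i).sum_one]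
    exact Finset.prod_const_one

/-- The trivial pmf on a singleton type. -/
def unitPMF : FinPMF PUnit where
  p _ := 1
  nonneg _ := zero_le_one
  sum_one := by simp

/-- The uniform pmf on a nonempty finite type. -/
def uniformPMF (A : Type) [Fintype A] (h : Nonempty A) : FinPMF A where
  p _ := (Fintype.card A : ℝ)⁻¹
  nonneg _ := by positivity
  sum_one := by
    haveI := h
    rw [Finset.sum_const, Finset.card_univ, nsmul_eq_mul]
    exact mul_inv_cancel₀ (Nat.cast_ne_zero.mpr Fintype.card_ne_zero)

/-! ### Alphabets of rate `r` and block length `n`, i.e. `[2^{r n}]` -/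

/-- Size of the alphabet `[2^{r n}]`. -/
def asize (r : ℝ) (n : ℕ) : ℕ := ⌊(2:ℝ) ^ (r * n)⌋₊

/-- The alphabet `[2^{r n}]`. -/
abbrev alpha (r : ℝ) (n : ℕ) : Type := Fin (asize r n)

lemma alpha_nonempty {r : ℝ} (hr : 0 ≤ r) (n : ℕ) : Nonempty (alpha r n) := by
  have h1 : (1:ℝ) ≤ (2:ℝ) ^ (r * n) := Real.one_le_rpow one_le_two (by positivity)
  have h2 : 1 ≤ asize r n := Nat.le_floor (by exact_mod_cast h1)
  exact ⟨⟨0, lt_of_lt_of_le zero_lt_one h2⟩⟩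

end

noncomputable section

open scoped Classical

/-! ### Secure network-coding instances and (randomised) network codes -/

/-- A secure network-coding instance `I = (G, M, W)`: a finite directed acyclic graph
`G = (V, E)` (acyclicity is witnessed by a topological ordering `ord`) with nonnegative
edge capacities `c`, a connection requirement `M = (S, O, D)` consisting of mutually
independent source messages `X_s` of rate `R s` (distributed on `[2^{R s · n}]`
according to `μ s`), originating nodes `O` and destination nodes `D`, and an
eavesdropping pattern `W = ((A r, B r) : r ∈ Rε)` where eavesdropper `r` observes the
edges in `B r` and tries to reconstruct the messages indexed by `A r`. -/
structure NCInstance where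
  V : Type
  E : Type
  S : Type
  Rε : Type
  [fV : Fintype V]
  [fE : Fintype E]
  [fS : Fintype S]
  [fRε : Fintype Rε]
  tail : E → V
  head : E → V
  ord : V → ℕ
  acyclic : ∀ e, ord (tail e) < ord (head e)
  c : E → ℝ
  cnn : ∀ e, 0 ≤ c e
  n : ℕ
  npos : 0 < n
  R : S → ℝ
  μ : ∀ s, FinPMF (alpha (R s) n)
  O : S → V
  D : S → Finset V
  A : Rε → Finset S
  B : Rε → Finset E

attribute [instance] NCInstance.fV NCInstance.fE NCInstance.fS NCInstance.fRε

/-- The alphabet of the source message `X_s`. -/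
abbrev NCInstance.Msg (I : NCInstance) (s : I.S) : Type := alpha (I.R s) I.n

/-- A tuple of realisations of all source messages. -/
abbrev NCInstance.SrcTuple (I : NCInstance) : Type := ∀ s : I.S, I.Msg s

/-- The edges entering a node. -/
abbrev NCInstance.InE (I : NCInstance) (v : I.V) : Type := {e : I.E // I.head e = v}

/-- The edges leaving a node. -/
abbrev NCInstance.OutE (I : NCInstance) (v : I.V) : Type := {e : I.E // I.tail e = v}

/-- The source messages originating at a node. -/
abbrev NCInstance.SrcAt (I : NCInstance) (v : I.V) : Type := {s : I.S // I.O s = v}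

/-- The source messages demanded by a node. -/
abbrev NCInstance.DemAt (I : NCInstance) (v : I.V) : Type := {s : I.S // v ∈ I.D s}

/-- The alphabet `[2^{c e · n}]` of the message carried by an edge `e`. -/
abbrev EAc (I : NCInstance) (e : I.E) : Type := alpha (I.c e) I.n

/-- The key rate `k_v = ∑_{e ∈ out(v)} c_e` of a node `v`. -/
def kRate (I : NCInstance) (v : I.V) : ℝ :=
  ∑ e ∈ Finset.univ.filter (fun e : I.E => I.tail e = v), I.c e

lemma kRate_nonneg (I : NCInstance) (v : I.V) : 0 ≤ kRate I v :=
  Finset.sum_nonneg fun e _ => I.cnn e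

/-- The alphabet of the random key `Z_v` of node `v`, of size `∏_{e ∈ out(v)} 2^{c_e n}`
(that is, `2^{k_v n}`). -/
abbrev KeyA (I : NCInstance) (v : I.V) : Type := alpha (kRate I v) I.n

/-- A tuple of realisations of all random keys. -/
abbrev KeyTuple (I : NCInstance) : Type := ∀ v : I.V, KeyA I v

/-- A (possibly randomised) network code for the instance `I`.  Each node `v` generates an
independent random key `Z_v` distributed according to `κ v`; a deterministic code is one
whose local encoders do not depend on the keys.  The local encoding function `f e` maps
the messages on the incoming edges of `tail e`, the source messages originating at
`tail e`, and the key of `tail e` to the message transmitted on `e`.  The decoding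
function `g v` maps the messages on the incoming edges of `v` and the source messages
originating at `v` to the tuple of source messages demanded by `v`. -/
structure NCCode (I : NCInstance) where
  κ : ∀ v : I.V, FinPMF (KeyA I v)
  f : ∀ e : I.E, (∀ e' : I.InE (I.tail e), EAc I e'.1) →
      (∀ s : I.SrcAt (I.tail e), I.Msg s.1) → KeyA I (I.tail e) → EAc I e
  g : ∀ v : I.V, (∀ e' : I.InE v, EAc I e'.1) →
      (∀ s : I.SrcAt v, I.Msg s.1) → ∀ s : I.DemAt v, I.Msg s.1

/-- A family of global encoding functions: a candidate value `Xe e x z` for the message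
carried by edge `e` when the sources are `x` and the keys are `z`. -/
abbrev GlobalEnc (I : NCInstance) : Type := ∀ e : I.E, I.SrcTuple → KeyTuple I → EAc I e

variable {I : NCInstance}

/-- The joint probability measure of the (mutually independent) source messages and
random keys. -/
def ncP (I : NCInstance) (C : NCCode I) : FinPMF (I.SrcTuple × KeyTuple I) :=
  prodPMF (piPMF I.μ) (piPMF C.κ)

/-- `Xe` is the family of global encoding functions of the code `C`: on every edge, the
transmitted message is obtained by applying the local encoding function to the messages
on the incoming edges, the locally originating sources, and the local key. -/
def NCCode.IsGlobal (C : NCCode I) (Xe : GlobalEnc I) : Prop :=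
  ∀ e x z, Xe e x z = C.f e (fun e' => Xe e'.1 x z) (fun s => x s.1) (z (I.tail e))

/-- The code is deterministic: no local encoder depends on the random keys. -/
def NCCode.Deterministic (C : NCCode I) : Prop :=
  ∀ e ins srcs z z', C.f e ins srcs z = C.f e ins srcs z'

/-- Validity (with global encoding functions `Xe`): `Xe` is the family of global encoding
functions of `C` and every destination node decodes the messages it demands with zero
error. -/
def NCCode.ValidWith (C : NCCode I) (Xe : GlobalEnc I) : Prop :=
  C.IsGlobal Xe ∧
    ∀ x z, 0 < (ncP I C).p (x, z) →
      ∀ v (s : I.DemAt v), C.g v (fun e' => Xe e'.1 x z) (fun s' => x s'.1) s = x s.1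

/-- Security (with global encoding functions `Xe`): each eavesdropper `r`, observing the
messages carried by the edges in `B r`, gains no information about the source messages
indexed by `A r`, i.e. `H(X_{A r} | X_{B r}) = H(X_{A r})`. -/
def NCCode.SecureWith (C : NCCode I) (Xe : GlobalEnc I) : Prop :=
  ∀ r : I.Rε,
    (ncP I C).condH (fun ω => fun s : (I.A r) => ω.1 s.1)
        (fun ω => fun e : (I.B r) => Xe e.1 ω.1 ω.2)
      = (ncP I C).entH (fun ω => fun s : (I.A r) => ω.1 s.1)

/-! ### Secure index-coding instances and (randomised) index codes -/

/-- A secure index-coding instance `Î = (Ŝ, T̂, {Ŵ_t}, {Ĥ_t}, Ŵ)`: a sender has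
mutually independent messages `X̂ s`, `s ∈ Ŝ`, of rate `Rhat s` (distributed on
`[2^{Rhat s · n}]` according to `μ s`); receiver `t ∈ T̂` knows the messages `Ht t` a
priori and must decode the messages `Wt t`; eavesdropper `r ∈ Rε` observes the broadcast
codeword and the messages `B r`, and tries to reconstruct the messages `A r`. -/
structure ICInstance where
  Shat : Type
  That : Type
  Rε : Type
  [fS : Fintype Shat]
  [fT : Fintype That]
  [fRε : Fintype Rε]
  n : ℕ
  npos : 0 < n
  Rhat : Shat → ℝ
  μ : ∀ s, FinPMF (alpha (Rhat s) n)
  Wt : That → Finset Shat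
  Ht : That → Finset Shat
  A : Rε → Finset Shat
  B : Rε → Finset Shat

attribute [instance] ICInstance.fS ICInstance.fT ICInstance.fRε

/-- The alphabet of the message `X̂ s`. -/
abbrev ICInstance.Msg (J : ICInstance) (s : J.Shat) : Type := alpha (J.Rhat s) J.n

/-- A tuple of realisations of all messages. -/
abbrev ICInstance.SrcTuple (J : ICInstance) : Type := ∀ s : J.Shat, J.Msg s

/-- A (possibly randomised) index code for the instance `J`: the sender encodes the
messages together with an independent random key `Ẑ` (taking values in `K`, distributed
according to `κ`, and known only to the sender) into a broadcast codeword in `BC`;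
receiver `t` decodes from the broadcast codeword and its side information. -/
structure ICCode (J : ICInstance) where
  BC : Type
  [fBC : Fintype BC]
  K : Type
  [fK : Fintype K]
  κ : FinPMF K
  enc : J.SrcTuple → K → BC
  dec : ∀ t : J.That, BC → (∀ s : (J.Ht t), J.Msg s.1) → ∀ s : (J.Wt t), J.Msg s.1

attribute [instance] ICCode.fBC ICCode.fK

variable {J : ICInstance}

/-- The joint probability measure of the (mutually independent) messages and the
sender's random key. -/
def icP (J : ICInstance) (C : ICCode J) : FinPMF (J.SrcTuple × C.K) :=
  prodPMF (piPMF J.μ) C.κ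

/-- The broadcast alphabet respects the broadcast rate `cb`: it has at most `2^{cb · n}`
elements. -/
def ICCode.RateOK (C : ICCode J) (cb : ℝ) : Prop :=
  Fintype.card C.BC ≤ asize cb J.n

/-- Validity at broadcast rate `cb`: the broadcast rate is respected and every receiver
decodes the messages it demands with zero error from the broadcast codeword and its side
information. -/
def ICCode.Valid (C : ICCode J) (cb : ℝ) : Prop :=
  C.RateOK cb ∧
    ∀ x z, 0 < (icP J C).p (x, z) →
      ∀ t (s : (J.Wt t)), C.dec t (C.enc x z) (fun s' => x s'.1) s = x s.1

/-- Security: each eavesdropper `r`, observing the broadcast codeword and the messages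
indexed by `B r`, gains no information about the messages indexed by `A r`, i.e.
`H(X̂_{A r} | X̂_b, X̂_{B r}) = H(X̂_{A r})`. -/
def ICCode.Secure (C : ICCode J) : Prop :=
  ∀ r : J.Rε,
    (icP J C).condH (fun ω => fun s : (J.A r) => ω.1 s.1)
        (fun ω => (C.enc ω.1 ω.2, fun s : (J.B r) => ω.1 s.1))
      = (icP J C).entH (fun ω => fun s : (J.A r) => ω.1 s.1)

/-- `(R̂_Ŝ, ĉ_b, n)`-feasibility of the secure index-coding instance `J`: there is a
valid secure (deterministic or randomised) index code of broadcast rate `cb`. -/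
def ICFeasible (J : ICInstance) (cb : ℝ) : Prop :=
  ∃ C : ICCode J, C.Valid cb ∧ C.Secure

/-! ### The augmented secure network-coding instance -/

/-- The source-index set `S' = S ∪ {S̄ + v : v ∈ V}` of the augmented instance. -/
abbrev augS (I : NCInstance) : Type := I.S ⊕ I.V

/-- Rates of the augmented sources: original sources keep their rates, and the additional
source at node `v` has rate `k_v`. -/
def augR (I : NCInstance) : augS I → ℝ
  | .inl s => I.R s
  | .inr v => kRate I v

/-- Origins of the augmented sources: the additional source `X'_{S̄+v}` originates at
node `v`. -/
def augO (I : NCInstance) : augS I → I.V := Sum.elim I.O id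

/-- Destinations of the augmented sources: the additional sources are demanded by no
node. -/
def augD (I : NCInstance) : augS I → Finset I.V
  | .inl s => I.D s
  | .inr _ => ∅

/-- **The augmented secure network-coding instance** `I' = (G', M', W')` associated with
`I` and key distributions `κ`: same graph, capacities and eavesdropping pattern; for each
vertex `v` an additional source `X'_{S̄+v}`, distributed as the random key `Z_v` (i.e.
according to `κ v`, on an alphabet of size `2^{k_v n}`), originates at `v` and is
demanded by no node.  The additional sources are neither known to the eavesdroppers nor
required to be protected. -/
def aug (I : NCInstance) (κ : ∀ v : I.V, FinPMF (KeyA I v)) : NCInstance where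
  V := I.V
  E := I.E
  S := augS I
  Rε := I.Rε
  fV := inferInstance
  fE := inferInstance
  fS := inferInstance
  fRε := inferInstance
  tail := I.tail
  head := I.head
  ord := I.ord
  acyclic := I.acyclic
  c := I.c
  cnn := I.cnn
  n := I.n
  npos := I.npos
  R := augR I
  μ := fun s => match s with
    | .inl s => I.μ s
    | .inr v => κ v
  O := augO I
  D := augD I
  A := fun r => (I.A r).image Sum.inl
  B := I.B

/-! ### The network-to-index coding mapping -/

/-- The set `T'` of vertices of `I` that are destinations of some source message. -/
abbrev Tp (I : NCInstance) : Type := {v : I.V // ∃ s : I.S, v ∈ I.D s}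

/-- Side information of the receiver associated with a vertex `v`:
`in(v) ∪ O'⁻¹(v)`, i.e. the messages associated with the edges entering `v` together
with the (augmented) sources originating at `v`. -/
def htSet (I : NCInstance) (v : I.V) : Finset (augS I ⊕ I.E) :=
  ((Finset.univ.filter fun e : I.E => I.head e = v).image Sum.inr) ∪
    ((Finset.univ.filter fun s' : augS I => augO I s' = v).image Sum.inl)

/-- Demands of the receiver associated with a destination vertex `v`: the original
source messages demanded by `v`. -/
def dWt (I : NCInstance) (v : I.V) : Finset (augS I ⊕ I.E) :=
  (Finset.univ.filter fun s : I.S => v ∈ I.D s).image fun s => Sum.inl (Sum.inl s)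

/-- Message rates of the index-coding instance: rate `R' s'` for `s' ∈ S'` and rate
`c e` for `e ∈ E'`. -/
def n2iR (I : NCInstance) : augS I ⊕ I.E → ℝ
  | .inl s' => augR I s'
  | .inr e => I.c e

/-- The broadcast rate `ĉ_b = ∑_{e ∈ E'} c_e`. -/
def cbRate (I : NCInstance) : ℝ := ∑ e : I.E, I.c e

/-- **Network-to-index coding mapping.**  The secure index-coding instance `Î` obtained
from the augmented instance of `I` (with key distributions `κ`): one message per
augmented source `s' ∈ S'` (with its distribution) and one message per edge `e ∈ E'`
(mutually independent and uniform on `[2^{c_e n}]`); one receiver `t̂_e` per edge,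
knowing `in(tail e) ∪ O'⁻¹(tail e)` and demanding `{e}`, and one receiver `t̂_i` per
destination vertex `i ∈ T'`, knowing `in(i) ∪ O'⁻¹(i)` and demanding
`{s ∈ S : i ∈ D s}`; eavesdropper `r` knows the messages `B r` (as edge messages) and
tries to reconstruct the messages `A r` (as source messages). -/
def net2idx (I : NCInstance) (κ : ∀ v : I.V, FinPMF (KeyA I v)) : ICInstance where
  Shat := augS I ⊕ I.E
  That := Tp I ⊕ I.E
  Rε := I.Rε
  fS := inferInstance
  fT := inferInstance
  fRε := inferInstance
  n := I.n
  npos := I.npos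
  Rhat := n2iR I
  μ := fun s => match s with
    | .inl (.inl s) => I.μ s
    | .inl (.inr v) => κ v
    | .inr e => uniformPMF _ (alpha_nonempty (I.cnn e) I.n)
  Wt := fun t => match t with
    | .inl vt => dWt I vt.1
    | .inr e => {Sum.inr e}
  Ht := fun t => match t with
    | .inl vt => htSet I vt.1
    | .inr e => htSet I (I.tail e)
  A := fun r => (I.A r).image fun s => Sum.inl (Sum.inl s)
  B := fun r => (I.B r).image Sum.inr

/-! ### Helper lemmas about the mapping -/

lemma mem_htSet_inr (I : NCInstance) (v : I.V) (e : I.E) :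
    (Sum.inr e : augS I ⊕ I.E) ∈ htSet I v ↔ I.head e = v := by
  simp [htSet]

lemma mem_htSet_inl (I : NCInstance) (v : I.V) (s' : augS I) :
    (Sum.inl s' : augS I ⊕ I.E) ∈ htSet I v ↔ augO I s' = v := by
  simp [htSet]

lemma mem_dWt_inl_inl (I : NCInstance) (v : I.V) (s : I.S) :
    (Sum.inl (Sum.inl s) : augS I ⊕ I.E) ∈ dWt I v ↔ v ∈ I.D s := by
  simp [dWt]

lemma not_mem_dWt_inl_inr (I : NCInstance) (v : I.V) (v' : I.V) :
    (Sum.inl (Sum.inr v') : augS I ⊕ I.E) ∉ dWt I v := by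
  simp [dWt]

lemma not_mem_dWt_inr (I : NCInstance) (v : I.V) (e : I.E) :
    (Sum.inr e : augS I ⊕ I.E) ∉ dWt I v := by
  simp [dWt]

/-- A default (fixed) realisation of the random keys, playing the role of the all-zeros
key. -/
def zdef (I : NCInstance) : KeyTuple I :=
  fun v => Classical.choice (alpha_nonempty (kRate_nonneg I v) I.n)

end

/-!
The key `Z_v` drawn by node `v` of `I` and the extra source `X'_{S̄+v}` of `I'` have the same
law and are both available exactly at `v`, so a randomised code for `I` and a deterministic code
for `I'` are the same local functions. Splitting a source tuple of `I'` into the sources and the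
keys of `I` is a bijection carrying the joint law of `I'` onto that of `I`; the eavesdroppers
therefore observe the same random variables up to relabelling, and all entropies agree. The one
asymmetry is decoding: a sink `v` of `I` cannot see its own key, while the decoder of `I'` may
read `X'_{S̄+v}`. By acyclicity no edge entering `v` depends on that source, so the decoder of `I`
feeds it an arbitrary key value of positive probability, and the decoder of `I'` is correct on
the resulting configuration because it still has positive probability.
-/

noncomputable section

namespace FinPMF

variable {Ω Ω' A : Type} [Fintype Ω] [Fintype Ω'] [Fintype A]

lemma exists_pos (μ : FinPMF Ω) : ∃ ω, 0 < μ.p ω := by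
  by_contra! h
  have h0 : ∑ ω, μ.p ω = 0 := Finset.sum_eq_zero fun ω _ => le_antisymm (h ω) (μ.nonneg ω)
  exact zero_ne_one (h0.symm.trans μ.sum_one)

lemma dist_comp_of_dist_eq {μ' : FinPMF Ω'} {μ : FinPMF Ω} {φ : Ω' → Ω}
    (hφ : ∀ ω, μ'.dist φ ω = μ.p ω) (X : Ω → A) (a : A) :
    μ'.dist (fun ω' => X (φ ω')) a = μ.dist X a := by
  calc μ'.dist (fun ω' => X (φ ω')) a
      = ∑ ω, ∑ ω' with φ ω' = ω, if X (φ ω') = a then μ'.p ω' else 0 :=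
        (Finset.sum_fiberwise _ _ _).symm
    _ = ∑ ω, if X ω = a then μ'.dist φ ω else 0 := by
        refine Finset.sum_congr rfl fun ω _ => ?_
        split_ifs with hX
        · rw [dist, prob, Finset.sum_filter]
          exact Finset.sum_congr rfl fun ω' _ => by by_cases h : φ ω' = ω <;> simp [h, hX]
        · exact Finset.sum_eq_zero fun ω' hω' => by rw [(Finset.mem_filter.1 hω').2, if_neg hX]
    _ = μ.dist X a := by simp only [hφ]; rfl

lemma entH_comp_of_dist_eq {μ' : FinPMF Ω'} {μ : FinPMF Ω} {φ : Ω' → Ω}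
    (hφ : ∀ ω, μ'.dist φ ω = μ.p ω) (X : Ω → A) :
    μ'.entH (fun ω' => X (φ ω')) = μ.entH X := by
  simp only [entH, dist_comp_of_dist_eq hφ]

lemma entH_comp_injective {B : Type} [Fintype B] (μ : FinPMF Ω) {ρ : A → B}
    (hρ : Function.Injective ρ) (X : Ω → A) :
    μ.entH (fun ω => ρ (X ω)) = μ.entH X := by
  have hrange : ∀ b ∉ Set.range ρ, μ.dist (fun ω => ρ (X ω)) b = 0 := fun b hb =>
    Finset.sum_eq_zero fun ω _ => if_neg fun h => hb ⟨X ω, h⟩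
  have hcomp : ∀ a, μ.dist (fun ω => ρ (X ω)) (ρ a) = μ.dist X a := fun a => by
    simp only [dist, prob, hρ.eq_iff]
  rw [entH, entH, neg_inj]
  refine (Fintype.sum_of_injective ρ hρ _ _ (fun b hb => ?_) fun a => ?_).symm
  · rw [hrange b hb, zero_mul]
  · rw [hcomp]

lemma condH_eq_entH_iff_of_dist_eq {B : Type} [Fintype B] {μ' : FinPMF Ω'} {μ : FinPMF Ω}
    {φ : Ω' → Ω} (hφ : ∀ ω, μ'.dist φ ω = μ.p ω) {A' : Type} [Fintype A'] {ρ : A' → A}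
    (hρ : Function.Injective ρ) {X' : Ω' → A'} {X : Ω → A} (hX : ∀ ω', ρ (X' ω') = X (φ ω'))
    {Y' : Ω' → B} {Y : Ω → B} (hY : ∀ ω', Y' ω' = Y (φ ω')) :
    μ'.condH X' Y' = μ'.entH X' ↔ μ.condH X Y = μ.entH X := by
  have hX' : μ'.entH X' = μ.entH X := by
    rw [← entH_comp_injective μ' hρ, funext hX, entH_comp_of_dist_eq hφ]
  have hXY : μ'.entH (fun ω' => (X' ω', Y' ω')) = μ.entH (fun ω => (X ω, Y ω)) := by
    rw [← entH_comp_injective μ' (hρ.prodMap (Function.injective_id (α := B)))]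
    simp only [Prod.map, hX, hY, id]
    exact entH_comp_of_dist_eq hφ fun ω => (X ω, Y ω)
  have hY' : μ'.entH Y' = μ.entH Y := by rw [funext hY, entH_comp_of_dist_eq hφ]
  rw [condH, condH, hX', hXY, hY']

lemma piPMF_p_pos_iff {ι : Type} [Fintype ι] {α : ι → Type} [∀ i, Fintype (α i)]
    (μ : ∀ i, FinPMF (α i)) (x : ∀ i, α i) :
    0 < (piPMF μ).p x ↔ ∀ i, 0 < (μ i).p (x i) :=
  ⟨fun h i => ((μ i).nonneg _).lt_of_ne fun h0 =>
      h.ne' (Finset.prod_eq_zero (Finset.mem_univ i) h0.symm),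
    fun h => Finset.prod_pos fun i _ => h i⟩

lemma piPMF_p_update_pos {ι : Type} [Fintype ι] {α : ι → Type} [∀ i, Fintype (α i)]
    {μ : ∀ i, FinPMF (α i)} {x : ∀ i, α i} (hx : 0 < (piPMF μ).p x) {i : ι} {a : α i}
    (ha : 0 < (μ i).p a) : 0 < (piPMF μ).p (Function.update x i a) := by
  rw [piPMF_p_pos_iff] at hx ⊢
  intro j
  rcases eq_or_ne j i with rfl | hj
  · simpa using ha
  · simpa [hj] using hx j

end FinPMF

namespace NCInstance

variable (J : NCInstance)

lemma ord_tail_lt_of_inE {v : J.V} (e : J.InE v) : J.ord (J.tail e.1) < J.ord v :=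
  lt_of_lt_of_eq (J.acyclic e.1) (congrArg J.ord e.2)

theorem edge_induction {P : J.E → Prop}
    (h : ∀ e, (∀ e' : J.InE (J.tail e), P e'.1) → P e) (e : J.E) : P e := by
  induction hN : J.ord (J.tail e) using Nat.strong_induction_on generalizing e with
  | _ N ih => exact h e fun e' => ih _ (hN ▸ J.ord_tail_lt_of_inE e') e'.1 rfl

end NCInstance

namespace NCCode.IsGlobal

variable {J : NCInstance} {C : NCCode J} {Xe : GlobalEnc J}

lemma eq_of_deterministic (hG : C.IsGlobal Xe) (hD : C.Deterministic) (x : J.SrcTuple)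
    (z z' : KeyTuple J) (e : J.E) : Xe e x z = Xe e x z' := by
  induction e using J.edge_induction with
  | h e ih => rw [hG e x z, hG e x z', funext ih]; exact hD _ _ _ _ _

lemma eq_of_eqOn_upstream (hG : C.IsGlobal Xe) (z : KeyTuple J) {x₁ x₂ : J.SrcTuple}
    (e : J.E) (hx : ∀ s, J.ord (J.O s) ≤ J.ord (J.tail e) → x₁ s = x₂ s) :
    Xe e x₁ z = Xe e x₂ z := by
  induction e using J.edge_induction with
  | h e ih =>
    have hin : (fun e' : J.InE (J.tail e) => Xe e'.1 x₁ z)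
        = fun e' : J.InE (J.tail e) => Xe e'.1 x₂ z :=
      funext fun e' => ih e' fun s hs => hx s (hs.trans (J.ord_tail_lt_of_inE e').le)
    have hsrc : (fun s : J.SrcAt (J.tail e) => x₁ s.1)
        = fun s : J.SrcAt (J.tail e) => x₂ s.1 :=
      funext fun s => hx s.1 (congrArg J.ord s.2).le
    rw [hG e x₁ z, hG e x₂ z, hin, hsrc]

end NCCode.IsGlobal

section Augmented

variable {I : NCInstance} {κ : ∀ v : I.V, FinPMF (KeyA I v)}

variable (I κ) in
def augEquiv : (aug I κ).SrcTuple ≃ I.SrcTuple × KeyTuple I :=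
  Equiv.sumPiEquivProdPi _

lemma ncP_aug_p {C : NCCode I} (hκ : C.κ = κ) (C' : NCCode (aug I κ))
    (ω' : (aug I κ).SrcTuple × KeyTuple (aug I κ)) :
    (ncP (aug I κ) C').p ω' = (ncP I C).p (augEquiv I κ ω'.1) * (piPMF C'.κ).p ω'.2 := by
  subst hκ
  exact congrArg (· * _) (Fintype.prod_sum_type fun s => ((aug I C.κ).μ s).p (ω'.1 s))

lemma ncP_aug_dist_augEquiv {C : NCCode I} (hκ : C.κ = κ) (C' : NCCode (aug I κ))
    (ω : I.SrcTuple × KeyTuple I) :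
    (ncP (aug I κ) C').dist (fun ω' => augEquiv I κ ω'.1) ω = (ncP I C).p ω := by
  simp only [FinPMF.dist, FinPMF.prob, Fintype.sum_prod_type, ncP_aug_p hκ, ← ite_zero_mul,
    ← Finset.mul_sum, (piPMF C'.κ).sum_one, mul_one]
  rw [Fintype.sum_eq_single ((augEquiv I κ).symm ω) fun x' hx' =>
      if_neg fun h => hx' (by rw [← h, Equiv.symm_apply_apply]),
    Equiv.apply_symm_apply, if_pos rfl]

def augRestrict (r : I.Rε) (y : ∀ s' : (aug I κ).A r, (aug I κ).Msg s'.1) :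
    ∀ s : I.A r, I.Msg s.1 :=
  fun s => y ⟨.inl s.1, Finset.mem_image_of_mem (β := augS I) _ s.2⟩

lemma augRestrict_injective (r : I.Rε) : Function.Injective (augRestrict (κ := κ) r) := by
  intro y y' h
  funext ⟨s', hs'⟩
  obtain ⟨s, hs, rfl⟩ := (Finset.mem_image (β := augS I)).1 hs'
  exact congrFun h ⟨s, hs⟩

lemma secureWith_aug_iff {C : NCCode I} (hκ : C.κ = κ) {Xe : GlobalEnc I}
    {C' : NCCode (aug I κ)} {Xe' : GlobalEnc (aug I κ)}
    (hXe : ∀ e x' z', Xe' e x' z' = Xe e (augEquiv I κ x').1 (augEquiv I κ x').2) :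
    C'.SecureWith Xe' ↔ C.SecureWith Xe := by
  unfold NCCode.SecureWith
  exact forall_congr' fun r => FinPMF.condH_eq_entH_iff_of_dist_eq
    (ncP_aug_dist_augEquiv hκ C') (augRestrict_injective (I := I) r) (fun _ => rfl)
    fun ω' => funext fun e => hXe e.1 ω'.1 ω'.2

def NCCode.toAug (C : NCCode I) : NCCode (aug I C.κ) where
  κ := C.κ
  f e ins srcs _ := C.f e ins (fun s => srcs ⟨.inl s.1, s.2⟩) (srcs ⟨.inr (I.tail e), rfl⟩)
  g v ins srcs
    | ⟨.inl s, hs⟩ => C.g v ins (fun s' => srcs ⟨.inl s'.1, s'.2⟩) ⟨s, hs⟩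
    | ⟨.inr _, h⟩ => absurd h (Finset.notMem_empty _)

variable (κ) in
def GlobalEnc.toAug (Xe : GlobalEnc I) : GlobalEnc (aug I κ) :=
  fun e x' _ => Xe e (augEquiv I κ x').1 (augEquiv I κ x').2

lemma NCCode.deterministic_toAug (C : NCCode I) : C.toAug.Deterministic :=
  fun _ _ _ _ _ => rfl

lemma NCCode.ValidWith.toAug {C : NCCode I} {Xe : GlobalEnc I} (hV : C.ValidWith Xe) :
    C.toAug.ValidWith (Xe.toAug C.κ) := by
  refine ⟨fun e x' _ => hV.1 e _ _, fun x' z' hp v => ?_⟩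
  rintro ⟨s | u, hd⟩
  · rw [ncP_aug_p rfl] at hp
    exact hV.2 _ _ (pos_of_mul_pos_left hp ((piPMF _).nonneg _)) v ⟨s, hd⟩
  · exact absurd hd (Finset.notMem_empty _)

def augSrcAt {v : I.V} (srcs : ∀ s : I.SrcAt v, I.Msg s.1) (k : KeyA I v) :
    ∀ s' : (aug I κ).SrcAt v, (aug I κ).Msg s'.1
  | ⟨.inl s, h⟩ => srcs ⟨s, h⟩
  | ⟨.inr _, rfl⟩ => k

lemma augSrcAt_eq_augEquiv_symm (x : I.SrcTuple) (z : KeyTuple I) (v : I.V) :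
    augSrcAt (κ := κ) (fun s : I.SrcAt v => x s.1) (z v)
      = fun s' : (aug I κ).SrcAt v => (augEquiv I κ).symm (x, z) s'.1 := by
  funext s'
  rcases s' with ⟨s' | u, h⟩
  · rfl
  · cases h
    rfl

def NCCode.ofAug (C' : NCCode (aug I κ)) (z₀ : KeyTuple I) : NCCode I where
  κ := κ
  f e ins srcs z := C'.f e ins (augSrcAt srcs z) (zdef (aug I κ) (I.tail e))
  g v ins srcs d := C'.g v ins (augSrcAt srcs (z₀ v)) ⟨.inl d.1, d.2⟩

def GlobalEnc.ofAug (Xe' : GlobalEnc (aug I κ)) : GlobalEnc I :=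
  fun e x z => Xe' e ((augEquiv I κ).symm (x, z)) (zdef (aug I κ))

lemma NCCode.ValidWith.ofAug {C' : NCCode (aug I κ)} {Xe' : GlobalEnc (aug I κ)}
    (hV' : C'.ValidWith Xe') (hD : C'.Deterministic) {z₀ : KeyTuple I}
    (hz₀ : ∀ v, 0 < (κ v).p (z₀ v)) : (C'.ofAug z₀).ValidWith Xe'.ofAug := by
  refine ⟨fun e x z => ?_, fun x z hp v d => ?_⟩
  · exact (hV'.1 e _ _).trans (congrArg (fun srcs => C'.f e _ srcs _)
      (augSrcAt_eq_augEquiv_symm x z (I.tail e)).symm)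
  set z' := Function.update z v (z₀ v) with hz'
  obtain ⟨zκ, hzκ⟩ := (piPMF C'.κ).exists_pos
  have hpos : 0 < (ncP (aug I κ) C').p ((augEquiv I κ).symm (x, z'), zκ) := by
    rw [ncP_aug_p (C := C'.ofAug z₀) (κ := κ) rfl, Equiv.apply_symm_apply]
    refine mul_pos (mul_pos (pos_of_mul_pos_left hp ((piPMF _).nonneg _)) ?_) hzκ
    exact FinPMF.piPMF_p_update_pos (pos_of_mul_pos_right hp ((piPMF _).nonneg _)) (hz₀ v)
  have hin : (fun e' : (aug I κ).InE v => Xe' e'.1 ((augEquiv I κ).symm (x, z)) (zdef _))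
      = fun e' : (aug I κ).InE v => Xe' e'.1 ((augEquiv I κ).symm (x, z')) zκ := by
    funext e'
    rw [hV'.1.eq_of_deterministic hD _ _ zκ]
    refine hV'.1.eq_of_eqOn_upstream zκ e'.1 ?_
    rintro (s | u) hu
    · rfl
    · show z u = z' u
      refine (Function.update_of_ne (fun huv => ?_) _ _).symm
      exact (hu.trans_lt ((aug I κ).ord_tail_lt_of_inE e')).ne (congrArg I.ord huv)
  have hsrc : augSrcAt (fun s : I.SrcAt v => x s.1) (z₀ v)
      = fun s' : (aug I κ).SrcAt v => (augEquiv I κ).symm (x, z') s'.1 := by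
    rw [← augSrcAt_eq_augEquiv_symm, hz', Function.update_self]
  exact (congrArg₂ (fun ins srcs => C'.g v ins srcs ⟨.inl d.1, d.2⟩) hin hsrc).trans
    (hV'.2 _ _ hpos v ⟨.inl d.1, d.2⟩)

end Augmented

end

/-- **Statement 6.**  Let `I` be a secure network-coding instance and `aug I κ` its
augmented instance, where `κ v` is the distribution of the random key `Z_v` (so that the
additional source `X'_{S̄+v}`, of rate `k_v`, is distributed as `Z_v`, while
`R'_s = R_s` for the original sources `s ∈ S`).  Then `I` admits a valid secure
(possibly randomised) network code with key distributions `κ`, source rates `R_S` and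
block size `n` if and only if `aug I κ` admits a valid secure *deterministic* network
code with source rates `R'_{S'}` and block size `n`: the randomness `Z_v` used at each
node `v` of `I` is realised by the additional source `X'_{S̄+v}` of `aug I κ`, and
conversely. -/
theorem ncFeasible_iff_aug_deterministic_feasible (I : NCInstance)
    (κ : ∀ v : I.V, FinPMF (KeyA I v)) :
    (∃ (C : NCCode I) (Xe : GlobalEnc I), C.κ = κ ∧ C.ValidWith Xe ∧ C.SecureWith Xe)
      ↔ (∃ (C' : NCCode (aug I κ)) (Xe' : GlobalEnc (aug I κ)),
            C'.Deterministic ∧ C'.ValidWith Xe' ∧ C'.SecureWith Xe') := by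
  constructor
  · rintro ⟨C, Xe, rfl, hV, hS⟩
    exact ⟨C.toAug, Xe.toAug C.κ, C.deterministic_toAug, hV.toAug,
      (secureWith_aug_iff rfl fun _ _ _ => rfl).2 hS⟩
  · rintro ⟨C', Xe', hD, hV', hS'⟩
    choose z₀ hz₀ using fun v => (κ v).exists_pos
    refine ⟨C'.ofAug z₀, Xe'.ofAug, rfl, hV'.ofAug hD hz₀,
      (secureWith_aug_iff (κ := κ) rfl fun e x' z' => ?_).1 hS'⟩
    rw [hV'.1.eq_of_deterministic hD x' z' (zdef _)]
    simp only [GlobalEnc.ofAug, Prod.mk.eta, Equiv.symm_apply_apply]
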